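/- arXiv:2604.18547 — 5 statements merged into one kernel-verified Lean document; each statement's English description precedes it below -/
import Mathlib

section
/- Let y be a {−1,+1}-valued random variable and v₁, v₂ be [−1,1]-valued random variables that are conditionally independent given y. Define ψⱼ = E[(1+vⱼ)/2 | y=1], ηⱼ = E[(1−vⱼ)/2 | y=−1], πⱼ = (ψⱼ+ηⱼ)/2, and b = P(y=1) − P(y=−1). Then Cov(v₁, v₂) = (1−b²)(2π₁−1)(2π₂−1). -/
/-!
Split `Ω` into the two label classes `s = {y = 1}` and `sᶜ`. Conditional independence kills the
within-class covariances, so by the law of total covariance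
`Cov(v₁, v₂) = P(s) P(sᶜ) (m₁ - M₁) (m₂ - M₂)`, where `mⱼ` and `Mⱼ` are the class means of `vⱼ`.
Moreover `2πⱼ - 1 = ψⱼ + ηⱼ - 1 = (mⱼ - Mⱼ) / 2` and `1 - b² = (1 - b)(1 + b) = 4 P(s) P(sᶜ)`.
-/

namespace MeasureTheory

variable {Ω : Type*} [MeasurableSpace Ω] {μ : Measure Ω} {s : Set Ω} {f g : Ω → ℝ}

theorem setIntegral_div_measureReal_eq_setAverage :
    (∫ ω in s, f ω ∂μ) / μ.real s = ⨍ ω in s, f ω ∂μ := by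
  rw [setAverage_eq, smul_eq_mul, inv_mul_eq_div]

theorem setAverage_one_add_div_two (h₀ : μ s ≠ 0) (hs : μ s ≠ ⊤) (hf : IntegrableOn f s μ) :
    ⨍ ω in s, (1 + f ω) / 2 ∂μ = (1 + ⨍ ω in s, f ω ∂μ) / 2 := by
  have hp : μ.real s ≠ 0 := (measureReal_ne_zero_iff hs).2 h₀
  rw [setAverage_eq, setAverage_eq, integral_div,
    integral_add (integrableOn_const hs (C := (1 : ℝ))) hf, setIntegral_const]
  simp only [smul_eq_mul]
  field_simp

theorem setAverage_one_sub_div_two (h₀ : μ s ≠ 0) (hs : μ s ≠ ⊤) (hf : IntegrableOn f s μ) :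
    ⨍ ω in s, (1 - f ω) / 2 ∂μ = (1 - ⨍ ω in s, f ω ∂μ) / 2 := by
  have hp : μ.real s ≠ 0 := (measureReal_ne_zero_iff hs).2 h₀
  rw [setAverage_eq, setAverage_eq, integral_div,
    integral_sub (integrableOn_const hs (C := (1 : ℝ))) hf, setIntegral_const]
  simp only [smul_eq_mul]
  field_simp

theorem integral_mul_sub_integral_mul_integral_eq_of_condUncorrelated [IsProbabilityMeasure μ]
    (hs : MeasurableSet s) (h₀ : μ s ≠ 0) (hc₀ : μ sᶜ ≠ 0)
    (hf : Integrable f μ) (hg : Integrable g μ) (hfg : Integrable (fun ω ↦ f ω * g ω) μ)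
    (hs_unc : (∫ ω in s, f ω * g ω ∂μ) * μ.real s
      = (∫ ω in s, f ω ∂μ) * ∫ ω in s, g ω ∂μ)
    (hsc_unc : (∫ ω in sᶜ, f ω * g ω ∂μ) * μ.real sᶜ
      = (∫ ω in sᶜ, f ω ∂μ) * ∫ ω in sᶜ, g ω ∂μ) :
    (∫ ω, f ω * g ω ∂μ) - (∫ ω, f ω ∂μ) * (∫ ω, g ω ∂μ)
      = μ.real s * μ.real sᶜ * ((⨍ ω in s, f ω ∂μ) - ⨍ ω in sᶜ, f ω ∂μ)
          * ((⨍ ω in s, g ω ∂μ) - ⨍ ω in sᶜ, g ω ∂μ) := by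
  have hp : μ.real s ≠ 0 := (measureReal_ne_zero_iff (measure_ne_top μ s)).2 h₀
  have hq : μ.real sᶜ ≠ 0 := (measureReal_ne_zero_iff (measure_ne_top μ sᶜ)).2 hc₀
  have hpq : μ.real s + μ.real sᶜ = 1 := by
    rw [measureReal_add_measureReal_compl hs, probReal_univ]
  rw [← integral_add_compl hs hf, ← integral_add_compl hs hg, ← integral_add_compl hs hfg,
    eq_div_of_mul_eq hp hs_unc, eq_div_of_mul_eq hq hsc_unc]
  simp only [setAverage_eq, smul_eq_mul]
  field_simp
  linear_combination -((∫ ω in s, f ω ∂μ) * (∫ ω in s, g ω ∂μ) * μ.real sᶜ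
    + (∫ ω in sᶜ, f ω ∂μ) * (∫ ω in sᶜ, g ω ∂μ) * μ.real s) * hpq

end MeasureTheory

open MeasureTheory

/-- Under conditional independence of two `[-1,1]`-valued verifiers given a `{-1,1}`-valued
label `y`, the covariance equals `(1-b^2)(2π₁-1)(2π₂-1)`. -/
theorem stmt0 {Ω : Type*} [MeasurableSpace Ω] (μ : Measure Ω) [IsProbabilityMeasure μ]
    (y v1 v2 : Ω → ℝ)
    (hy : ∀ ω, y ω = 1 ∨ y ω = -1)
    (hmy : Measurable y) (hm1 : Measurable v1) (hm2 : Measurable v2)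
    (hv1 : ∀ ω, v1 ω ∈ Set.Icc (-1 : ℝ) 1) (hv2 : ∀ ω, v2 ω ∈ Set.Icc (-1 : ℝ) 1)
    (hpos1 : μ {ω | y ω = 1} ≠ 0) (hposm : μ {ω | y ω = -1} ≠ 0)
    -- conditional independence of v1 and v2 given y
    (hCI : ∀ s : ℝ, (s = 1 ∨ s = -1) →
      (∫ ω in {ω | y ω = s}, v1 ω * v2 ω ∂μ) * (μ {ω | y ω = s}).toReal
        = (∫ ω in {ω | y ω = s}, v1 ω ∂μ) * (∫ ω in {ω | y ω = s}, v2 ω ∂μ))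
    (b ψ1 ψ2 η1 η2 π1 π2 : ℝ)
    (hb : b = (μ {ω | y ω = 1}).toReal - (μ {ω | y ω = -1}).toReal)
    (hψ1 : ψ1 = (∫ ω in {ω | y ω = 1}, (1 + v1 ω) / 2 ∂μ) / (μ {ω | y ω = 1}).toReal)
    (hψ2 : ψ2 = (∫ ω in {ω | y ω = 1}, (1 + v2 ω) / 2 ∂μ) / (μ {ω | y ω = 1}).toReal)
    (hη1 : η1 = (∫ ω in {ω | y ω = -1}, (1 - v1 ω) / 2 ∂μ) / (μ {ω | y ω = -1}).toReal)
    (hη2 : η2 = (∫ ω in {ω | y ω = -1}, (1 - v2 ω) / 2 ∂μ) / (μ {ω | y ω = -1}).toReal)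
    (hπ1 : π1 = (ψ1 + η1) / 2) (hπ2 : π2 = (ψ2 + η2) / 2) :
    (∫ ω, v1 ω * v2 ω ∂μ) - (∫ ω, v1 ω ∂μ) * (∫ ω, v2 ω ∂μ)
      = (1 - b ^ 2) * (2 * π1 - 1) * (2 * π2 - 1) := by
  set s : Set Ω := {ω | y ω = 1}
  have hs : MeasurableSet s := hmy (measurableSet_singleton 1)
  have hsc : {ω | y ω = -1} = sᶜ := by
    ext ω
    rcases hy ω with h | h <;> simp [s, h] <;> norm_num
  rw [hsc] at hposm hb hη1 hη2
  have hint1 := Integrable.of_mem_Icc (μ := μ) (-1) 1 hm1.aemeasurable (ae_of_all _ hv1)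
  have hint2 := Integrable.of_mem_Icc (μ := μ) (-1) 1 hm2.aemeasurable (ae_of_all _ hv2)
  have hint12 : Integrable (fun ω ↦ v1 ω * v2 ω) μ :=
    hint2.bdd_mul hm1.aestronglyMeasurable (ae_of_all _ fun ω ↦ abs_le.2 (hv1 ω))
  have hbalanced : ∀ v : Ω → ℝ, Integrable v μ →
      2 * (((∫ ω in s, (1 + v ω) / 2 ∂μ) / (μ s).toReal
        + (∫ ω in sᶜ, (1 - v ω) / 2 ∂μ) / (μ sᶜ).toReal) / 2) - 1
        = ((⨍ ω in s, v ω ∂μ) - ⨍ ω in sᶜ, v ω ∂μ) / 2 := fun v hv ↦ by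
    simp only [← measureReal_def, setIntegral_div_measureReal_eq_setAverage]
    rw [setAverage_one_add_div_two hpos1 (measure_ne_top μ s) hv.integrableOn,
      setAverage_one_sub_div_two hposm (measure_ne_top μ sᶜ) hv.integrableOn]
    ring
  have hb' : 1 - b ^ 2 = 4 * μ.real s * μ.real sᶜ := by
    rw [hb, ← measureReal_def, ← measureReal_def, probReal_compl_eq_one_sub hs]
    ring
  have hCIc := hCI (-1) (.inr rfl)
  rw [hsc] at hCIc
  rw [integral_mul_sub_integral_mul_integral_eq_of_condUncorrelated hs hpos1 hposm hint1 hint2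
    hint12 (hCI 1 (.inl rfl)) hCIc, hb', hπ1, hπ2, hψ1, hψ2, hη1, hη2,
    hbalanced v1 hint1, hbalanced v2 hint2]
  ring
end

section
/- Let y be {−1,+1}-valued with b = P(y=1)−P(y=−1), and v₁, v₂, v₃ be [−1,1]-valued random variables, jointly conditionally independent given y. With πⱼ the balanced accuracy of vⱼ, the third central cross-moment satisfies E[∏ⱼ(vⱼ − E vⱼ)] = −2b(1−b²)(2π₁−1)(2π₂−1)(2π₃−1). -/
/-!
Conditioning on `y` writes `μ` as the mixture `p • μ[|S] + q • μ[|Sᶜ]` with `S = {y = 1}`. Under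
each conditional law the moments of the `vⱼ` up to order three factorize, hence so does the centered
triple moment: `E±[∏ (vⱼ - eⱼ)] = ∏ (a±ⱼ - eⱼ)`. As `eⱼ = p a⁺ⱼ + q a⁻ⱼ`, these factors are `q dⱼ`
and `-p dⱼ` with `dⱼ = a⁺ⱼ - a⁻ⱼ = 2 (2πⱼ - 1)`, so the moment is `p q (q² - p²) ∏ dⱼ`; conclude
with `b = p - q`, `p + q = 1` and `1 - b² = 4 p q`.
-/

open MeasureTheory

section

open ProbabilityTheory

variable {Ω : Type*} [MeasurableSpace Ω] {μ : Measure Ω} {s : Set Ω} {v v1 v2 v3 : Ω → ℝ}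

lemma memLp_top_of_mem_Icc {a b : ℝ} (hv : Measurable v) (h : ∀ ω, v ω ∈ Set.Icc a b) :
    MemLp v ⊤ μ :=
  memLp_top_of_bound hv.aestronglyMeasurable (max |a| |b|)
    (ae_of_all _ fun ω => abs_le_max_abs_abs (h ω).1 (h ω).2)

lemma MeasureTheory.MemLp.cond (hv : MemLp v ⊤ μ) (hs : μ s ≠ 0) : MemLp v ⊤ μ[|s] :=
  (hv.restrict s).smul_measure (ENNReal.inv_ne_top.mpr hs)

lemma MeasureTheory.MemLp.sub_mul_sub_mul_sub [IsFiniteMeasure μ] (h1 : MemLp v1 ⊤ μ)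
    (h2 : MemLp v2 ⊤ μ) (h3 : MemLp v3 ⊤ μ) (e1 e2 e3 : ℝ) :
    MemLp (fun ω => (v1 ω - e1) * (v2 ω - e2) * (v3 ω - e3)) ⊤ μ :=
  (h3.sub (memLp_const e3)).mul' (r := ⊤)
    ((h2.sub (memLp_const e2)).mul' (r := ⊤) (h1.sub (memLp_const e1)))

lemma integral_sub_mul_sub_mul_sub [IsFiniteMeasure μ] (h1 : MemLp v1 ⊤ μ) (h2 : MemLp v2 ⊤ μ)
    (h3 : MemLp v3 ⊤ μ) (e1 e2 e3 : ℝ) :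
    ∫ ω, (v1 ω - e1) * (v2 ω - e2) * (v3 ω - e3) ∂μ
      = (∫ ω, v1 ω * v2 ω * v3 ω ∂μ) - e3 * (∫ ω, v1 ω * v2 ω ∂μ) - e2 * (∫ ω, v1 ω * v3 ω ∂μ)
        - e1 * (∫ ω, v2 ω * v3 ω ∂μ) + e2 * e3 * (∫ ω, v1 ω ∂μ) + e1 * e3 * (∫ ω, v2 ω ∂μ)
        + e1 * e2 * (∫ ω, v3 ω ∂μ) - e1 * e2 * e3 * μ.real Set.univ := by
  have i1 := h1.integrable le_top
  have i2 := h2.integrable le_top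
  have i3 := h3.integrable le_top
  have i12 := (h2.mul' (r := ⊤) h1).integrable le_top
  have i13 := (h3.mul' (r := ⊤) h1).integrable le_top
  have i23 := (h3.mul' (r := ⊤) h2).integrable le_top
  have i123 := (h3.mul' (r := ⊤) (h2.mul' (r := ⊤) h1)).integrable le_top
  have expand : ∀ ω, (v1 ω - e1) * (v2 ω - e2) * (v3 ω - e3)
      = v1 ω * v2 ω * v3 ω - e3 * (v1 ω * v2 ω) - e2 * (v1 ω * v3 ω) - e1 * (v2 ω * v3 ω)
        + e2 * e3 * v1 ω + e1 * e3 * v2 ω + e1 * e2 * v3 ω - e1 * e2 * e3 := fun ω => by ring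
  simp_rw [expand]
  rw [integral_sub (by fun_prop) (by fun_prop), integral_add (by fun_prop) (by fun_prop),
    integral_add (by fun_prop) (by fun_prop), integral_add (by fun_prop) (by fun_prop),
    integral_sub (by fun_prop) (by fun_prop), integral_sub (by fun_prop) (by fun_prop),
    integral_sub (by fun_prop) (by fun_prop)]
  simp only [integral_const_mul, integral_const, smul_eq_mul]
  ring

lemma integral_sub_mul_sub_mul_sub_of_factorizes [IsProbabilityMeasure μ]
    (h1 : MemLp v1 ⊤ μ) (h2 : MemLp v2 ⊤ μ) (h3 : MemLp v3 ⊤ μ)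
    (h12 : ∫ ω, v1 ω * v2 ω ∂μ = (∫ ω, v1 ω ∂μ) * ∫ ω, v2 ω ∂μ)
    (h13 : ∫ ω, v1 ω * v3 ω ∂μ = (∫ ω, v1 ω ∂μ) * ∫ ω, v3 ω ∂μ)
    (h23 : ∫ ω, v2 ω * v3 ω ∂μ = (∫ ω, v2 ω ∂μ) * ∫ ω, v3 ω ∂μ)
    (h123 : ∫ ω, v1 ω * v2 ω * v3 ω ∂μ = (∫ ω, v1 ω ∂μ) * (∫ ω, v2 ω ∂μ) * ∫ ω, v3 ω ∂μ)
    (e1 e2 e3 : ℝ) :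
    ∫ ω, (v1 ω - e1) * (v2 ω - e2) * (v3 ω - e3) ∂μ
      = ((∫ ω, v1 ω ∂μ) - e1) * ((∫ ω, v2 ω ∂μ) - e2) * ((∫ ω, v3 ω ∂μ) - e3) := by
  rw [integral_sub_mul_sub_mul_sub h1 h2 h3, h12, h13, h23, h123, probReal_univ]
  ring

lemma integral_cond_eq_setIntegral_div (s : Set Ω) (f : Ω → ℝ) :
    ∫ ω, f ω ∂μ[|s] = (∫ ω in s, f ω ∂μ) / (μ s).toReal := by
  rw [ProbabilityTheory.cond, integral_smul_measure, ENNReal.toReal_inv, smul_eq_mul,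
    inv_mul_eq_div]

lemma measure_toReal_mul_integral_cond [IsFiniteMeasure μ] (s : Set Ω) (f : Ω → ℝ) :
    (μ s).toReal * ∫ ω, f ω ∂μ[|s] = ∫ ω in s, f ω ∂μ := by
  rw [integral_cond_eq_setIntegral_div]
  by_cases hs : μ s = 0
  · simp [Measure.restrict_eq_zero.mpr hs]
  · exact mul_div_cancel₀ _ (ENNReal.toReal_ne_zero.mpr ⟨hs, measure_ne_top μ s⟩)

lemma integral_eq_cond_add_cond_compl [IsFiniteMeasure μ] (hs : MeasurableSet s)
    (hv : Integrable v μ) :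
    ∫ ω, v ω ∂μ = (μ s).toReal * (∫ ω, v ω ∂μ[|s]) + (μ sᶜ).toReal * ∫ ω, v ω ∂μ[|sᶜ] := by
  rw [measure_toReal_mul_integral_cond, measure_toReal_mul_integral_cond,
    integral_add_compl hs hv]

lemma integral_cond_sub_mul_sub_mul_sub [IsFiniteMeasure μ] (hs : μ s ≠ 0)
    (h1 : MemLp v1 ⊤ μ) (h2 : MemLp v2 ⊤ μ) (h3 : MemLp v3 ⊤ μ)
    (h12 : (∫ ω in s, v1 ω * v2 ω ∂μ) * (μ s).toReal
      = (∫ ω in s, v1 ω ∂μ) * (∫ ω in s, v2 ω ∂μ))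
    (h13 : (∫ ω in s, v1 ω * v3 ω ∂μ) * (μ s).toReal
      = (∫ ω in s, v1 ω ∂μ) * (∫ ω in s, v3 ω ∂μ))
    (h23 : (∫ ω in s, v2 ω * v3 ω ∂μ) * (μ s).toReal
      = (∫ ω in s, v2 ω ∂μ) * (∫ ω in s, v3 ω ∂μ))
    (h123 : (∫ ω in s, v1 ω * v2 ω * v3 ω ∂μ) * (μ s).toReal ^ 2
      = (∫ ω in s, v1 ω ∂μ) * (∫ ω in s, v2 ω ∂μ) * (∫ ω in s, v3 ω ∂μ))
    (e1 e2 e3 : ℝ) :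
    ∫ ω, (v1 ω - e1) * (v2 ω - e2) * (v3 ω - e3) ∂μ[|s]
      = ((∫ ω, v1 ω ∂μ[|s]) - e1) * ((∫ ω, v2 ω ∂μ[|s]) - e2) * ((∫ ω, v3 ω ∂μ[|s]) - e3) := by
  have := cond_isProbabilityMeasure (μ := μ) hs
  have hm : (μ s).toReal ≠ 0 := ENNReal.toReal_ne_zero.mpr ⟨hs, measure_ne_top μ s⟩
  refine integral_sub_mul_sub_mul_sub_of_factorizes (h1.cond hs) (h2.cond hs) (h3.cond hs)
    ?_ ?_ ?_ ?_ e1 e2 e3 <;> simp only [integral_cond_eq_setIntegral_div] <;> field_simp <;>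
    assumption

lemma setIntegral_one_add_div_two_div [IsFiniteMeasure μ] (hs : μ s ≠ 0) (hv : MemLp v ⊤ μ) :
    (∫ ω in s, (1 + v ω) / 2 ∂μ) / (μ s).toReal = (1 + ∫ ω, v ω ∂μ[|s]) / 2 := by
  have := cond_isProbabilityMeasure (μ := μ) hs
  rw [← integral_cond_eq_setIntegral_div, integral_div,
    integral_add (integrable_const 1) ((hv.cond hs).integrable le_top)]
  simp

lemma setIntegral_one_sub_div_two_div [IsFiniteMeasure μ] (hs : μ s ≠ 0) (hv : MemLp v ⊤ μ) :
    (∫ ω in s, (1 - v ω) / 2 ∂μ) / (μ s).toReal = (1 - ∫ ω, v ω ∂μ[|s]) / 2 := by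
  have := cond_isProbabilityMeasure (μ := μ) hs
  rw [← integral_cond_eq_setIntegral_div, integral_div,
    integral_sub (integrable_const 1) ((hv.cond hs).integrable le_top)]
  simp

end

/-- For three `[-1,1]`-valued verifiers jointly conditionally independent given a binary label,
the third central cross-moment equals `-2b(1-b²)(2π₁-1)(2π₂-1)(2π₃-1)`. -/
theorem stmt1 {Ω : Type*} [MeasurableSpace Ω] (μ : Measure Ω) [IsProbabilityMeasure μ]
    (y v1 v2 v3 : Ω → ℝ)
    (hy : ∀ ω, y ω = 1 ∨ y ω = -1)
    (hmy : Measurable y) (hm1 : Measurable v1) (hm2 : Measurable v2) (hm3 : Measurable v3)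
    (hv1 : ∀ ω, v1 ω ∈ Set.Icc (-1 : ℝ) 1) (hv2 : ∀ ω, v2 ω ∈ Set.Icc (-1 : ℝ) 1)
    (hv3 : ∀ ω, v3 ω ∈ Set.Icc (-1 : ℝ) 1)
    (hpos1 : μ {ω | y ω = 1} ≠ 0) (hposm : μ {ω | y ω = -1} ≠ 0)
    -- pairwise conditional independence given y
    (hCI12 : ∀ s : ℝ, (s = 1 ∨ s = -1) →
      (∫ ω in {ω | y ω = s}, v1 ω * v2 ω ∂μ) * (μ {ω | y ω = s}).toReal
        = (∫ ω in {ω | y ω = s}, v1 ω ∂μ) * (∫ ω in {ω | y ω = s}, v2 ω ∂μ))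
    (hCI13 : ∀ s : ℝ, (s = 1 ∨ s = -1) →
      (∫ ω in {ω | y ω = s}, v1 ω * v3 ω ∂μ) * (μ {ω | y ω = s}).toReal
        = (∫ ω in {ω | y ω = s}, v1 ω ∂μ) * (∫ ω in {ω | y ω = s}, v3 ω ∂μ))
    (hCI23 : ∀ s : ℝ, (s = 1 ∨ s = -1) →
      (∫ ω in {ω | y ω = s}, v2 ω * v3 ω ∂μ) * (μ {ω | y ω = s}).toReal
        = (∫ ω in {ω | y ω = s}, v2 ω ∂μ) * (∫ ω in {ω | y ω = s}, v3 ω ∂μ))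
    -- triple conditional independence given y
    (hCI123 : ∀ s : ℝ, (s = 1 ∨ s = -1) →
      (∫ ω in {ω | y ω = s}, v1 ω * v2 ω * v3 ω ∂μ) * (μ {ω | y ω = s}).toReal ^ 2
        = (∫ ω in {ω | y ω = s}, v1 ω ∂μ) * (∫ ω in {ω | y ω = s}, v2 ω ∂μ)
          * (∫ ω in {ω | y ω = s}, v3 ω ∂μ))
    (b ψ1 ψ2 ψ3 η1 η2 η3 π1 π2 π3 : ℝ)
    (hb : b = (μ {ω | y ω = 1}).toReal - (μ {ω | y ω = -1}).toReal)
    (hψ1 : ψ1 = (∫ ω in {ω | y ω = 1}, (1 + v1 ω) / 2 ∂μ) / (μ {ω | y ω = 1}).toReal)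
    (hψ2 : ψ2 = (∫ ω in {ω | y ω = 1}, (1 + v2 ω) / 2 ∂μ) / (μ {ω | y ω = 1}).toReal)
    (hψ3 : ψ3 = (∫ ω in {ω | y ω = 1}, (1 + v3 ω) / 2 ∂μ) / (μ {ω | y ω = 1}).toReal)
    (hη1 : η1 = (∫ ω in {ω | y ω = -1}, (1 - v1 ω) / 2 ∂μ) / (μ {ω | y ω = -1}).toReal)
    (hη2 : η2 = (∫ ω in {ω | y ω = -1}, (1 - v2 ω) / 2 ∂μ) / (μ {ω | y ω = -1}).toReal)
    (hη3 : η3 = (∫ ω in {ω | y ω = -1}, (1 - v3 ω) / 2 ∂μ) / (μ {ω | y ω = -1}).toReal)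
    (hπ1 : π1 = (ψ1 + η1) / 2) (hπ2 : π2 = (ψ2 + η2) / 2) (hπ3 : π3 = (ψ3 + η3) / 2) :
    (∫ ω, (v1 ω - ∫ ω', v1 ω' ∂μ) * (v2 ω - ∫ ω', v2 ω' ∂μ) * (v3 ω - ∫ ω', v3 ω' ∂μ) ∂μ)
      = -2 * b * (1 - b ^ 2) * (2 * π1 - 1) * (2 * π2 - 1) * (2 * π3 - 1) := by
  set S := {ω | y ω = 1}
  have hS : MeasurableSet S := hmy (measurableSet_singleton 1)
  have hSc : {ω | y ω = -1} = Sᶜ := by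
    ext ω
    rcases hy ω with h | h <;> norm_num [S, h]
  have h1 : MemLp v1 ⊤ μ := memLp_top_of_mem_Icc hm1 hv1
  have h2 : MemLp v2 ⊤ μ := memLp_top_of_mem_Icc hm2 hv2
  have h3 : MemLp v3 ⊤ μ := memLp_top_of_mem_Icc hm3 hv3
  have hS_moment := integral_cond_sub_mul_sub_mul_sub hpos1 h1 h2 h3 (hCI12 1 (.inl rfl))
    (hCI13 1 (.inl rfl)) (hCI23 1 (.inl rfl)) (hCI123 1 (.inl rfl))
  have hSc_moment := integral_cond_sub_mul_sub_mul_sub hposm h1 h2 h3 (hCI12 (-1) (.inr rfl))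
    (hCI13 (-1) (.inr rfl)) (hCI23 (-1) (.inr rfl)) (hCI123 (-1) (.inr rfl))
  rw [hSc] at hposm hSc_moment hb hη1 hη2 hη3
  have hq : (μ Sᶜ).toReal = 1 - (μ S).toReal := by
    simpa [measureReal_def, eq_sub_iff_add_eq'] using probReal_add_probReal_compl (μ := μ) hS
  rw [integral_eq_cond_add_cond_compl hS ((h1.sub_mul_sub_mul_sub h2 h3 _ _ _).integrable le_top),
    hS_moment, hSc_moment, integral_eq_cond_add_cond_compl hS (h1.integrable le_top),
    integral_eq_cond_add_cond_compl hS (h2.integrable le_top),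
    integral_eq_cond_add_cond_compl hS (h3.integrable le_top)]
  rw [hb, hπ1, hπ2, hπ3, hψ1, hψ2, hψ3, hη1, hη2, hη3,
    setIntegral_one_add_div_two_div hpos1 h1, setIntegral_one_add_div_two_div hpos1 h2,
    setIntegral_one_add_div_two_div hpos1 h3, setIntegral_one_sub_div_two_div hposm h1,
    setIntegral_one_sub_div_two_div hposm h2, setIntegral_one_sub_div_two_div hposm h3, hq]
  ring
end

section
/- If every triplet of distinct verifiers is conditionally independent given the binary label y, and all balanced accuracies satisfy πⱼ ≠ 1/2 and b ∉ {−1,0,1}, then the collection of ratios {T_{j₁,j₂,j₃}/Σ_{j₁,j₂} : 1 ≤ j₁ < j₂ < j₃ ≤ m, j₃ fixed} has exactly one value for each fixed j₃; i.e., the sample variance of these ratios over pairs (j₁,j₂) is zero. -/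
/-!
Given `y`, the verifiers are a two-component mixture. Writing `p = P(y = 1)`, `q = 1 - p` and
`dⱼ = E[vⱼ | y = 1] - E[vⱼ | y = -1]`, triplet conditional independence turns every moment into a
mixture of products of conditional means, which gives `Σᵢⱼ = p q dᵢ dⱼ` and
`Tᵢⱼₖ = p q (q - p) dᵢ dⱼ dₖ`. The balanced accuracy is `πⱼ = 1/2 + dⱼ/4`, so `dⱼ ≠ 0`, and the ratio
`Tᵢⱼₖ / Σᵢⱼ = (q - p) dₖ` does not depend on the pair `(i, j)`.
-/

open MeasureTheory

section SampleVariance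

variable {ι K : Type*} [Field K] [CharZero K]

def sampleVariance (s : Finset ι) (f : ι → K) : K :=
  1 / (s.card : K) * ∑ i ∈ s, (f i - (∑ j ∈ s, f j) / (s.card : K)) ^ 2

theorem sampleVariance_eq_zero_of_forall_eq {s : Finset ι} {f : ι → K} {c : K}
    (h : ∀ i ∈ s, f i = c) : sampleVariance s f = 0 := by
  have hdev : ∀ i ∈ s, (f i - (∑ j ∈ s, f j) / (s.card : K)) ^ 2 = 0 := by
    intro i hi
    have hcard : (s.card : K) ≠ 0 := Nat.cast_ne_zero.mpr (Finset.card_ne_zero_of_mem hi)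
    rw [Finset.sum_congr rfl h, Finset.sum_const, nsmul_eq_mul, mul_div_cancel_left₀ _ hcard,
      h i hi, sub_self, sq, mul_zero]
  rw [sampleVariance, Finset.sum_eq_zero hdev, mul_zero]

end SampleVariance

section TwoClassMixture

variable {Ω ι : Type*} [MeasurableSpace Ω] {μ : Measure Ω} {s : Set Ω}

noncomputable def condMeanGap (μ : Measure Ω) (s : Set Ω) (f : Ω → ℝ) : ℝ :=
  (⨍ x in s, f x ∂μ) - ⨍ x in sᶜ, f x ∂μ

noncomputable def balancedAccuracy (μ : Measure Ω) (s : Set Ω) (f : Ω → ℝ) : ℝ :=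
  ((∫ x in s, (1 + f x) / 2 ∂μ) / μ.real s + (∫ x in sᶜ, (1 - f x) / 2 ∂μ) / μ.real sᶜ) / 2

/-- Conditional independence of every triplet of distinct `v i` given the event `s`, expressed
through the mixed moments of orders two and three. -/
def TripletCondIndepOn (μ : Measure Ω) (s : Set Ω) (v : ι → Ω → ℝ) : Prop :=
  (∀ i j, i ≠ j →
    ⨍ x in s, v i x * v j x ∂μ = (⨍ x in s, v i x ∂μ) * ⨍ x in s, v j x ∂μ) ∧
  (∀ i j k, i ≠ j → i ≠ k → j ≠ k →
    ⨍ x in s, v i x * v j x * v k x ∂μ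
      = (⨍ x in s, v i x ∂μ) * (⨍ x in s, v j x ∂μ) * ⨍ x in s, v k x ∂μ)

theorem tripletCondIndepOn_of_integral_mul {v : ι → Ω → ℝ} (hs : μ.real s ≠ 0)
    (hpair : ∀ i j, i ≠ j →
      (∫ x in s, v i x * v j x ∂μ) * μ.real s = (∫ x in s, v i x ∂μ) * ∫ x in s, v j x ∂μ)
    (htriple : ∀ i j k, i ≠ j → i ≠ k → j ≠ k →
      (∫ x in s, v i x * v j x * v k x ∂μ) * μ.real s ^ 2
        = (∫ x in s, v i x ∂μ) * (∫ x in s, v j x ∂μ) * ∫ x in s, v k x ∂μ) :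
    TripletCondIndepOn μ s v := by
  refine ⟨fun i j hij => ?_, fun i j k hij hik hjk => ?_⟩
  · simp only [setAverage_eq, smul_eq_mul]
    field_simp
    linear_combination hpair i j hij
  · simp only [setAverage_eq, smul_eq_mul]
    field_simp
    linear_combination htriple i j k hij hik hjk

theorem integral_eq_measureReal_mul_setAverage_add [IsFiniteMeasure μ] (hs : MeasurableSet s)
    {f : Ω → ℝ} (hf : Integrable f μ) :
    ∫ x, f x ∂μ = μ.real s * (⨍ x in s, f x ∂μ) + μ.real sᶜ * ⨍ x in sᶜ, f x ∂μ := by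
  rw [← integral_add_compl hs hf, ← measure_smul_setAverage f (measure_ne_top μ s),
    ← measure_smul_setAverage f (measure_ne_top μ sᶜ), smul_eq_mul, smul_eq_mul]

theorem integral_sub_mul_sub_mul_sub_s3 [IsProbabilityMeasure μ] {f g h : Ω → ℝ}
    (hf : MemLp f ⊤ μ) (hg : MemLp g ⊤ μ) (hh : MemLp h ⊤ μ) (a b c : ℝ) :
    ∫ x, (f x - a) * (g x - b) * (h x - c) ∂μ
      = ∫ x, f x * g x * h x ∂μ - c * ∫ x, f x * g x ∂μ - b * ∫ x, f x * h x ∂μ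
        - a * ∫ x, g x * h x ∂μ + b * c * ∫ x, f x ∂μ + a * c * ∫ x, g x ∂μ
        + a * b * ∫ x, h x ∂μ - a * b * c := by
  have hfg := (hg.mul' (r := ⊤) hf).integrable le_top
  have hfh := (hh.mul' (r := ⊤) hf).integrable le_top
  have hgh := (hh.mul' (r := ⊤) hg).integrable le_top
  have hfgh := (hh.mul' (r := ⊤) (hg.mul' (r := ⊤) hf)).integrable le_top
  have hf := hf.integrable le_top
  have hg := hg.integrable le_top
  have hh := hh.integrable le_top
  have hexpand : (fun x => (f x - a) * (g x - b) * (h x - c)) = fun x =>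
      f x * g x * h x - c * (f x * g x) - b * (f x * h x) - a * (g x * h x)
        + b * c * f x + a * c * g x + a * b * h x - a * b * c := by
    funext x; ring
  rw [hexpand, integral_sub, integral_add, integral_add, integral_add, integral_sub,
    integral_sub, integral_sub]
  all_goals try fun_prop
  simp only [integral_const_mul, integral_const, probReal_univ, one_smul]

theorem balancedAccuracy_eq [IsFiniteMeasure μ] (hs₀ : μ.real s ≠ 0)
    (hsc₀ : μ.real sᶜ ≠ 0) {f : Ω → ℝ} (hf : Integrable f μ) :
    balancedAccuracy μ s f = 1 / 2 + condMeanGap μ s f / 4 := by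
  simp only [balancedAccuracy, condMeanGap, setAverage_eq, smul_eq_mul, integral_div,
    integral_add (integrable_const 1).integrableOn hf.integrableOn,
    integral_sub (integrable_const 1).integrableOn hf.integrableOn, setIntegral_const]
  field_simp
  ring

variable [IsProbabilityMeasure μ] {v : ι → Ω → ℝ}

theorem integral_mul_sub_mul_eq_of_tripletCondIndepOn (hs : MeasurableSet s)
    (hS : TripletCondIndepOn μ s v) (hSc : TripletCondIndepOn μ sᶜ v) (hv : ∀ i, MemLp (v i) ⊤ μ)
    {i j : ι} (hij : i ≠ j) :
    (∫ x, v i x * v j x ∂μ) - (∫ x, v i x ∂μ) * ∫ x, v j x ∂μ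
      = μ.real s * μ.real sᶜ * condMeanGap μ s (v i) * condMeanGap μ s (v j) := by
  have hvv := ((hv j).mul' (r := ⊤) (hv i)).integrable le_top
  rw [integral_eq_measureReal_mul_setAverage_add hs hvv,
    integral_eq_measureReal_mul_setAverage_add hs ((hv i).integrable le_top),
    integral_eq_measureReal_mul_setAverage_add hs ((hv j).integrable le_top),
    hS.1 i j hij, hSc.1 i j hij, condMeanGap, condMeanGap, probReal_compl_eq_one_sub hs]
  ring

theorem integral_centered_mul_mul_eq_of_tripletCondIndepOn (hs : MeasurableSet s)
    (hS : TripletCondIndepOn μ s v) (hSc : TripletCondIndepOn μ sᶜ v) (hv : ∀ i, MemLp (v i) ⊤ μ)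
    {i j k : ι} (hij : i ≠ j) (hik : i ≠ k) (hjk : j ≠ k) :
    ∫ x, (v i x - ∫ x', v i x' ∂μ) * (v j x - ∫ x', v j x' ∂μ) * (v k x - ∫ x', v k x' ∂μ) ∂μ
      = μ.real s * μ.real sᶜ * (μ.real sᶜ - μ.real s)
          * condMeanGap μ s (v i) * condMeanGap μ s (v j) * condMeanGap μ s (v k) := by
  have hI : ∀ i, Integrable (v i) μ := fun i => (hv i).integrable le_top
  have hII : ∀ i j, Integrable (fun x => v i x * v j x) μ := fun i j =>
    ((hv j).mul' (r := ⊤) (hv i)).integrable le_top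
  have hIII : Integrable (fun x => v i x * v j x * v k x) μ :=
    ((hv k).mul' (r := ⊤) ((hv j).mul' (r := ⊤) (hv i))).integrable le_top
  simp only [integral_sub_mul_sub_mul_sub_s3 (hv i) (hv j) (hv k),
    integral_eq_measureReal_mul_setAverage_add hs hIII,
    integral_eq_measureReal_mul_setAverage_add hs (hII _ _),
    integral_eq_measureReal_mul_setAverage_add hs (hI _),
    hS.1 _ _ hij, hS.1 _ _ hik, hS.1 _ _ hjk, hSc.1 _ _ hij, hSc.1 _ _ hik, hSc.1 _ _ hjk,
    hS.2 _ _ _ hij hik hjk, hSc.2 _ _ _ hij hik hjk, condMeanGap, probReal_compl_eq_one_sub hs]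
  ring

theorem thirdCentralMoment_div_covariance_eq (hs : MeasurableSet s) (hs₀ : μ.real s ≠ 0)
    (hsc₀ : μ.real sᶜ ≠ 0) (hS : TripletCondIndepOn μ s v) (hSc : TripletCondIndepOn μ sᶜ v)
    (hv : ∀ i, MemLp (v i) ⊤ μ) {i j k : ι} (hi : condMeanGap μ s (v i) ≠ 0)
    (hj : condMeanGap μ s (v j) ≠ 0) (hij : i ≠ j) (hik : i ≠ k) (hjk : j ≠ k) :
    (∫ x, (v i x - ∫ x', v i x' ∂μ) * (v j x - ∫ x', v j x' ∂μ) * (v k x - ∫ x', v k x' ∂μ) ∂μ)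
        / ((∫ x, v i x * v j x ∂μ) - (∫ x, v i x ∂μ) * ∫ x, v j x ∂μ)
      = (μ.real sᶜ - μ.real s) * condMeanGap μ s (v k) := by
  rw [integral_centered_mul_mul_eq_of_tripletCondIndepOn hs hS hSc hv hij hik hjk,
    integral_mul_sub_mul_eq_of_tripletCondIndepOn hs hS hSc hv hij]
  field_simp

end TwoClassMixture

theorem stmt3_general {Ω : Type*} [MeasurableSpace Ω] (μ : Measure Ω) [IsProbabilityMeasure μ]
    {m : ℕ} (y : Ω → ℝ) (v : Fin m → Ω → ℝ)
    (hy : ∀ ω, y ω = 1 ∨ y ω = -1)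
    (hmy : Measurable y) (hmv : ∀ j, Measurable (v j))
    (hvbd : ∀ j ω, v j ω ∈ Set.Icc (-1 : ℝ) 1)
    (hpos1 : μ {ω | y ω = 1} ≠ 0) (hposm : μ {ω | y ω = -1} ≠ 0)
    -- TCI: every triple of distinct verifiers is conditionally independent given y
    (hTCIpair : ∀ j1 j2 : Fin m, j1 ≠ j2 → ∀ s : ℝ, (s = 1 ∨ s = -1) →
      (∫ ω in {ω | y ω = s}, v j1 ω * v j2 ω ∂μ) * (μ {ω | y ω = s}).toReal
        = (∫ ω in {ω | y ω = s}, v j1 ω ∂μ) * (∫ ω in {ω | y ω = s}, v j2 ω ∂μ))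
    (hTCItriple : ∀ j1 j2 j3 : Fin m, j1 ≠ j2 → j1 ≠ j3 → j2 ≠ j3 →
      ∀ s : ℝ, (s = 1 ∨ s = -1) →
      (∫ ω in {ω | y ω = s}, v j1 ω * v j2 ω * v j3 ω ∂μ) * (μ {ω | y ω = s}).toReal ^ 2
        = (∫ ω in {ω | y ω = s}, v j1 ω ∂μ) * (∫ ω in {ω | y ω = s}, v j2 ω ∂μ)
          * (∫ ω in {ω | y ω = s}, v j3 ω ∂μ))
    (ψ η π : Fin m → ℝ)
    (Sig : Fin m → Fin m → ℝ) (T : Fin m → Fin m → Fin m → ℝ)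
    (hψ : ∀ j, ψ j = (∫ ω in {ω | y ω = 1}, (1 + v j ω) / 2 ∂μ) / (μ {ω | y ω = 1}).toReal)
    (hη : ∀ j, η j = (∫ ω in {ω | y ω = -1}, (1 - v j ω) / 2 ∂μ) / (μ {ω | y ω = -1}).toReal)
    (hπ : ∀ j, π j = (ψ j + η j) / 2)
    (hπne : ∀ j, π j ≠ 1 / 2)
    (hSig : ∀ i j, Sig i j
      = (∫ ω, v i ω * v j ω ∂μ) - (∫ ω, v i ω ∂μ) * (∫ ω, v j ω ∂μ))
    (hT : ∀ i j k, T i j k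
      = ∫ ω, (v i ω - ∫ ω', v i ω' ∂μ) * (v j ω - ∫ ω', v j ω' ∂μ)
          * (v k ω - ∫ ω', v k ω' ∂μ) ∂μ) :
    ∀ j3 : Fin m,
      (1 / ((Finset.univ.filter
          (fun p : Fin m × Fin m => p.1 < p.2 ∧ p.2 < j3)).card : ℝ)) *
        ∑ p ∈ Finset.univ.filter (fun p : Fin m × Fin m => p.1 < p.2 ∧ p.2 < j3),
          (T p.1 p.2 j3 / Sig p.1 p.2
            - (∑ q ∈ Finset.univ.filter (fun q : Fin m × Fin m => q.1 < q.2 ∧ q.2 < j3),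
                T q.1 q.2 j3 / Sig q.1 q.2)
              / ((Finset.univ.filter
                  (fun p : Fin m × Fin m => p.1 < p.2 ∧ p.2 < j3)).card : ℝ)) ^ 2
        = 0 := by
  intro j3
  set S := {ω | y ω = 1}
  have hS : MeasurableSet S := hmy (measurableSet_singleton 1)
  have hSc : {ω | y ω = -1} = Sᶜ := by
    ext ω
    rcases hy ω with h | h <;> simp [S, h] <;> norm_num
  have hlevel : ∀ t : ℝ, (t = 1 ∨ t = -1) → μ.real {ω | y ω = t} ≠ 0 := by
    rintro t (rfl | rfl)
    exacts [(measureReal_ne_zero_iff).2 hpos1, (measureReal_ne_zero_iff).2 hposm]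
  have hCI : ∀ t : ℝ, (t = 1 ∨ t = -1) → TripletCondIndepOn μ {ω | y ω = t} v := fun t ht =>
    tripletCondIndepOn_of_integral_mul (hlevel t ht) (fun i j hij => hTCIpair i j hij t ht)
      (fun i j k hij hik hjk => hTCItriple i j k hij hik hjk t ht)
  have hS₀ : μ.real S ≠ 0 := hlevel 1 (.inl rfl)
  have hSc₀ : μ.real Sᶜ ≠ 0 := hSc ▸ hlevel (-1) (.inr rfl)
  have hbdd : ∀ j, MemLp (v j) ⊤ μ := fun j =>
    memLp_top_of_bound (hmv j).aestronglyMeasurable 1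
      (ae_of_all _ fun ω => abs_le.mpr (hvbd j ω))
  have hgap : ∀ j, condMeanGap μ S (v j) ≠ 0 := by
    intro j hj
    apply hπne j
    rw [hπ, hψ, hη, hSc]
    change balancedAccuracy μ S (v j) = 1 / 2
    rw [balancedAccuracy_eq hS₀ hSc₀ ((hbdd j).integrable le_top), hj]
    ring
  have hratio : ∀ i j, i < j → j < j3 →
      T i j j3 / Sig i j = (μ.real Sᶜ - μ.real S) * condMeanGap μ S (v j3) := by
    intro i j hij hj3
    rw [hT, hSig]
    exact thirdCentralMoment_div_covariance_eq hS hS₀ hSc₀ (hCI 1 (.inl rfl))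
      (hSc ▸ hCI (-1) (.inr rfl)) hbdd (hgap i) (hgap j) hij.ne (hij.trans hj3).ne hj3.ne
  exact sampleVariance_eq_zero_of_forall_eq fun p hp =>
    hratio p.1 p.2 (Finset.mem_filter.1 hp).2.1 (Finset.mem_filter.1 hp).2.2

/-- Under TCI, all balanced accuracies ≠ 1/2, and b ∉ {-1,0,1}, for each fixed `j₃` the sample
variance of the ratios `T j₁ j₂ j₃ / Σ j₁ j₂` over pairs `j₁ < j₂ < j₃` is zero. -/
theorem stmt3 {Ω : Type*} [MeasurableSpace Ω] (μ : Measure Ω) [IsProbabilityMeasure μ]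
    {m : ℕ} (hm : 3 ≤ m) (y : Ω → ℝ) (v : Fin m → Ω → ℝ)
    (hy : ∀ ω, y ω = 1 ∨ y ω = -1)
    (hmy : Measurable y) (hmv : ∀ j, Measurable (v j))
    (hvbd : ∀ j ω, v j ω ∈ Set.Icc (-1 : ℝ) 1)
    (hpos1 : μ {ω | y ω = 1} ≠ 0) (hposm : μ {ω | y ω = -1} ≠ 0)
    -- TCI: every triple of distinct verifiers is conditionally independent given y
    (hTCIpair : ∀ j1 j2 : Fin m, j1 ≠ j2 → ∀ s : ℝ, (s = 1 ∨ s = -1) →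
      (∫ ω in {ω | y ω = s}, v j1 ω * v j2 ω ∂μ) * (μ {ω | y ω = s}).toReal
        = (∫ ω in {ω | y ω = s}, v j1 ω ∂μ) * (∫ ω in {ω | y ω = s}, v j2 ω ∂μ))
    (hTCItriple : ∀ j1 j2 j3 : Fin m, j1 ≠ j2 → j1 ≠ j3 → j2 ≠ j3 →
      ∀ s : ℝ, (s = 1 ∨ s = -1) →
      (∫ ω in {ω | y ω = s}, v j1 ω * v j2 ω * v j3 ω ∂μ) * (μ {ω | y ω = s}).toReal ^ 2
        = (∫ ω in {ω | y ω = s}, v j1 ω ∂μ) * (∫ ω in {ω | y ω = s}, v j2 ω ∂μ)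
          * (∫ ω in {ω | y ω = s}, v j3 ω ∂μ))
    (b : ℝ) (ψ η π : Fin m → ℝ)
    (Sig : Fin m → Fin m → ℝ) (T : Fin m → Fin m → Fin m → ℝ)
    (hb : b = (μ {ω | y ω = 1}).toReal - (μ {ω | y ω = -1}).toReal)
    (hbne : b ≠ 1 ∧ b ≠ -1 ∧ b ≠ 0)
    (hψ : ∀ j, ψ j = (∫ ω in {ω | y ω = 1}, (1 + v j ω) / 2 ∂μ) / (μ {ω | y ω = 1}).toReal)
    (hη : ∀ j, η j = (∫ ω in {ω | y ω = -1}, (1 - v j ω) / 2 ∂μ) / (μ {ω | y ω = -1}).toReal)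
    (hπ : ∀ j, π j = (ψ j + η j) / 2)
    (hπne : ∀ j, π j ≠ 1 / 2)
    (hSig : ∀ i j, Sig i j
      = (∫ ω, v i ω * v j ω ∂μ) - (∫ ω, v i ω ∂μ) * (∫ ω, v j ω ∂μ))
    (hT : ∀ i j k, T i j k
      = ∫ ω, (v i ω - ∫ ω', v i ω' ∂μ) * (v j ω - ∫ ω', v j ω' ∂μ)
          * (v k ω - ∫ ω', v k ω' ∂μ) ∂μ) :
    ∀ j3 : Fin m,
      (1 / ((Finset.univ.filter
          (fun p : Fin m × Fin m => p.1 < p.2 ∧ p.2 < j3)).card : ℝ)) *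
        ∑ p ∈ Finset.univ.filter (fun p : Fin m × Fin m => p.1 < p.2 ∧ p.2 < j3),
          (T p.1 p.2 j3 / Sig p.1 p.2
            - (∑ q ∈ Finset.univ.filter (fun q : Fin m × Fin m => q.1 < q.2 ∧ q.2 < j3),
                T q.1 q.2 j3 / Sig q.1 q.2)
              / ((Finset.univ.filter
                  (fun p : Fin m × Fin m => p.1 < p.2 ∧ p.2 < j3)).card : ℝ)) ^ 2
        = 0 :=
  stmt3_general μ y v hy hmy hmv hvbd hpos1 hposm hTCIpair hTCItriple ψ η π Sig T hψ hη hπ hπne hSig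
    hT
end

section
/- Let u = √(1−b²)(2π−1) and w = (−2b(1−b²))^{1/3}(2π−1) for b ∈ (−1,1), b ≠ 0, and π ≠ 1/2. Then b is uniquely determined by the pair (u, w³/u): namely, w³/u = −2b√(1−b²), and the map b ↦ −2b√(1−b²) restricted to appropriate sign information together with u recovers b. Formally: if (b₁,π₁) and (b₂,π₂) with bᵢ ∈ (−1,1)\{0}, πᵢ > 1/2 yield the same u and same w³, then b₁ = b₂ and π₁ = π₂. -/
/-!
Write `s = √(1 - b²) > 0` and `t = 2π - 1 > 0`, so that `u = s t` and `w³ = -2 b s² t³`.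
The scale `t` cancels in `w³ / u³ = -2 b / s`, and `b ↦ b / √(1 - b²)` is injective on `(-1, 1)`;
so `u` and `w³` determine `b`, hence `s`, and then `t = u / s`.
-/

open Set

lemma one_sub_sq_pos {b : ℝ} (hb : b ∈ Ioo (-1 : ℝ) 1) : 0 < 1 - b ^ 2 := by
  nlinarith [hb.1, hb.2]

lemma sqrt_one_sub_sq_pos {b : ℝ} (hb : b ∈ Ioo (-1 : ℝ) 1) : 0 < √(1 - b ^ 2) :=
  Real.sqrt_pos.mpr (one_sub_sq_pos hb)

lemma injOn_div_sqrt_one_sub_sq :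
    InjOn (fun b : ℝ => b / √(1 - b ^ 2)) (Ioo (-1) 1) := by
  intro b₁ hb₁ b₂ hb₂ h
  have hs₂ := sqrt_one_sub_sq_pos hb₂
  have hcross : b₁ * √(1 - b₂ ^ 2) = b₂ * √(1 - b₁ ^ 2) :=
    (div_eq_div_iff (sqrt_one_sub_sq_pos hb₁).ne' hs₂.ne').mp h
  have hsq : b₁ ^ 2 = b₂ ^ 2 := by
    have := congrArg (· ^ 2) hcross
    simp only [mul_pow, Real.sq_sqrt (one_sub_sq_pos hb₁).le,
      Real.sq_sqrt (one_sub_sq_pos hb₂).le] at this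
    linear_combination this
  rw [hsq] at hcross
  exact mul_right_cancel₀ hs₂.ne' hcross

lemma cube_div_cube_eq {b t : ℝ} (hb : b ∈ Ioo (-1 : ℝ) 1) (ht : 0 < t) :
    -2 * b * (1 - b ^ 2) * t ^ 3 / (√(1 - b ^ 2) * t) ^ 3 = -2 * (b / √(1 - b ^ 2)) := by
  have hs := sqrt_one_sub_sq_pos hb
  set s := √(1 - b ^ 2)
  have hs_sq : s ^ 2 = 1 - b ^ 2 := Real.sq_sqrt (one_sub_sq_pos hb).le
  rw [← hs_sq]
  field_simp

theorem stmt7_general (b₁ b₂ π₁ π₂ : ℝ)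
    (hb₁ : b₁ ∈ Set.Ioo (-1 : ℝ) 1) (hb₂ : b₂ ∈ Set.Ioo (-1 : ℝ) 1)
    (hπ₁ : π₁ ∈ Set.Ioc (1 / 2 : ℝ) 1) (hπ₂ : π₂ ∈ Set.Ioc (1 / 2 : ℝ) 1)
    (hu : Real.sqrt (1 - b₁ ^ 2) * (2 * π₁ - 1) = Real.sqrt (1 - b₂ ^ 2) * (2 * π₂ - 1))
    (hw : -2 * b₁ * (1 - b₁ ^ 2) * (2 * π₁ - 1) ^ 3
        = -2 * b₂ * (1 - b₂ ^ 2) * (2 * π₂ - 1) ^ 3) :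
    b₁ = b₂ ∧ π₁ = π₂ := by
  have ht₁ : 0 < 2 * π₁ - 1 := by linarith [hπ₁.1]
  have ht₂ : 0 < 2 * π₂ - 1 := by linarith [hπ₂.1]
  have hratio : b₁ / √(1 - b₁ ^ 2) = b₂ / √(1 - b₂ ^ 2) := by
    have h := cube_div_cube_eq hb₁ ht₁
    rw [hw, hu, cube_div_cube_eq hb₂ ht₂] at h
    linarith
  obtain rfl : b₁ = b₂ := injOn_div_sqrt_one_sub_sq hb₁ hb₂ hratio
  refine ⟨rfl, ?_⟩
  have := mul_left_cancel₀ (sqrt_one_sub_sq_pos hb₁).ne' hu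
  linarith

/-- Injectivity of `(b, π) ↦ (u, w³)` where `u = √(1-b²)(2π-1)` and
`w³ = -2b(1-b²)(2π-1)³`, on `b ∈ (-1,1) \ {0}`, `π ∈ (1/2, 1]`. -/
theorem stmt7 (b₁ b₂ π₁ π₂ : ℝ)
    (hb₁ : b₁ ∈ Set.Ioo (-1 : ℝ) 1) (hb₂ : b₂ ∈ Set.Ioo (-1 : ℝ) 1)
    (hb₁0 : b₁ ≠ 0) (hb₂0 : b₂ ≠ 0)
    (hπ₁ : π₁ ∈ Set.Ioc (1 / 2 : ℝ) 1) (hπ₂ : π₂ ∈ Set.Ioc (1 / 2 : ℝ) 1)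
    (hu : Real.sqrt (1 - b₁ ^ 2) * (2 * π₁ - 1) = Real.sqrt (1 - b₂ ^ 2) * (2 * π₂ - 1))
    (hw : -2 * b₁ * (1 - b₁ ^ 2) * (2 * π₁ - 1) ^ 3
        = -2 * b₂ * (1 - b₂ ^ 2) * (2 * π₂ - 1) ^ 3) :
    b₁ = b₂ ∧ π₁ = π₂ :=
  stmt7_general b₁ b₂ π₁ π₂ hb₁ hb₂ hπ₁ hπ₂ hu hw
end

section
/- Let y ∈ {−1,1} with class imbalance b, and let v₁, v₂ be {−1,1}-valued verifiers conditionally independent given y, with balanced accuracies π₁, π₂. Then Cov(v₁,v₂) ≥ 0 if π₁ > 1/2 and π₂ > 1/2 (and in fact Cov(v₁,v₂) = (1−b²)(2π₁−1)(2π₂−1) > 0 when b ∈ (−1,1)). -/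
open MeasureTheory

/-!
Conditioning on `y`, conditional independence gives `E[v₁v₂ | y = s] = E[v₁ | y = s] E[v₂ | y = s]`,
so `Cov(v₁, v₂)` is the covariance of the conditional means `mⱼ(s) = E[vⱼ | y = s]`. Since `y` has
only two values, of probabilities `p` and `q = 1 - p`, that covariance is
`p q (m₁(1) - m₁(-1)) (m₂(1) - m₂(-1))`. Finally `mⱼ(1) = 2ψⱼ - 1` and `mⱼ(-1) = 1 - 2ηⱼ`, so
`mⱼ(1) - mⱼ(-1) = 2(2πⱼ - 1)`, and `4pq = 1 - b²`. Both classes have positive mass: with the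
convention `x / 0 = 0` an empty class would force `ψ₁ = 0` or `η₁ = 0`, hence `π₁ ≤ 1/2`.
-/

section

variable {Ω α : Type*} [MeasurableSpace Ω] [MeasurableSpace α] [MeasurableSingletonClass α]
  {μ : Measure Ω} {X : Ω → α} {A : Finset α} {f g : Ω → ℝ} {A₁ A₂ : Finset ℝ}

theorem integral_eq_sum_setIntegral_fiber (hX : Measurable X) (hA : ∀ ω, X ω ∈ A)
    {F : Ω → ℝ} (hF : ∀ a ∈ A, IntegrableOn F {ω | X ω = a} μ) :
    ∫ ω, F ω ∂μ = ∑ a ∈ A, ∫ ω in {ω | X ω = a}, F ω ∂μ := by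
  have hcover : (⋃ a ∈ A, {ω | X ω = a}) = Set.univ :=
    Set.eq_univ_of_forall fun ω => Set.mem_biUnion (hA ω) rfl
  rw [← integral_biUnion_finset (s := fun a => {ω | X ω = a}) A
    (fun a _ => hX (measurableSet_singleton a))
    (fun a _ a' _ haa' => Set.disjoint_left.2 fun ω h h' => haa' (h.symm.trans h')) hF,
    hcover, Measure.restrict_univ]

section FiniteMeasure

variable [IsFiniteMeasure μ]

theorem integrable_of_forall_mem_finset (hf : AEStronglyMeasurable f μ)
    (hfA : ∀ ω, f ω ∈ A₁) : Integrable f μ :=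
  .of_bound hf (∑ a ∈ A₁, ‖a‖)
    (.of_forall fun ω => Finset.single_le_sum (fun a _ => norm_nonneg a) (hfA ω))

theorem measureReal_inter_div_le_one (T S : Set Ω) :
    μ.real (T ∩ S) / μ.real S ≤ 1 :=
  div_le_one_of_le₀ (measureReal_mono Set.inter_subset_right) measureReal_nonneg

theorem setIntegral_comp_eq_sum (hX : Measurable X) (hA : ∀ ω, X ω ∈ A)
    (h : α → ℝ) (S : Set Ω) :
    ∫ ω in S, h (X ω) ∂μ = ∑ a ∈ A, h a * μ.real ({ω | X ω = a} ∩ S) := by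
  have hXa (a : α) : MeasurableSet {ω | X ω = a} := hX (measurableSet_singleton a)
  have hfiber (a : α) : Set.EqOn (fun ω => h (X ω)) (fun _ => h a) {ω | X ω = a} :=
    fun ω hω => congrArg h hω
  rw [integral_eq_sum_setIntegral_fiber hX hA
    fun a _ => (integrableOn_const (by finiteness)).congr_fun (hfiber a).symm (hXa a)]
  refine Finset.sum_congr rfl fun a _ => ?_
  rw [setIntegral_congr_fun (hXa a) (hfiber a), setIntegral_const,
    measureReal_restrict_apply (hXa a), smul_eq_mul, mul_comm]

theorem setIntegral_eq_sum (hf : Measurable f) (hfA : ∀ ω, f ω ∈ A₁) (S : Set Ω) :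
    ∫ ω in S, f ω ∂μ = ∑ a ∈ A₁, a * μ.real ({ω | f ω = a} ∩ S) :=
  setIntegral_comp_eq_sum hf hfA id S

theorem measureReal_mul_setIntegral_mul_of_condIndep (hf : Measurable f) (hg : Measurable g)
    (hfA : ∀ ω, f ω ∈ A₁) (hgA : ∀ ω, g ω ∈ A₂) (S : Set Ω)
    (hCI : ∀ a₁ ∈ A₁, ∀ a₂ ∈ A₂, μ.real ({ω | f ω = a₁} ∩ {ω | g ω = a₂} ∩ S) * μ.real S
      = μ.real ({ω | f ω = a₁} ∩ S) * μ.real ({ω | g ω = a₂} ∩ S)) :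
    μ.real S * ∫ ω in S, f ω * g ω ∂μ = (∫ ω in S, f ω ∂μ) * ∫ ω in S, g ω ∂μ := by
  have hpair := setIntegral_comp_eq_sum (μ := μ) (hf.prodMk hg)
    (fun ω => Finset.mem_product.2 ⟨hfA ω, hgA ω⟩) (fun x => x.1 * x.2) S
  have hfiber (a₁ a₂ : ℝ) :
      {ω | (f ω, g ω) = (a₁, a₂)} = {ω | f ω = a₁} ∩ {ω | g ω = a₂} := by
    ext ω; simp
  simp only [hfiber] at hpair
  rw [hpair, setIntegral_eq_sum hf hfA S, setIntegral_eq_sum hg hgA S,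
    Finset.sum_mul_sum, Finset.sum_product]
  simp only [Finset.mul_sum]
  refine Finset.sum_congr rfl fun a₁ ha₁ => Finset.sum_congr rfl fun a₂ ha₂ => ?_
  linear_combination a₁ * a₂ * hCI a₁ ha₁ a₂ ha₂

theorem integral_mul_eq_sum_of_condIndep (hX : Measurable X) (hA : ∀ ω, X ω ∈ A)
    (hf : Measurable f) (hg : Measurable g) (hfA : ∀ ω, f ω ∈ A₁) (hgA : ∀ ω, g ω ∈ A₂)
    (hCI : ∀ s ∈ A, ∀ a₁ ∈ A₁, ∀ a₂ ∈ A₂,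
      μ.real ({ω | f ω = a₁} ∩ {ω | g ω = a₂} ∩ {ω | X ω = s}) * μ.real {ω | X ω = s}
        = μ.real ({ω | f ω = a₁} ∩ {ω | X ω = s}) * μ.real ({ω | g ω = a₂} ∩ {ω | X ω = s})) :
    ∫ ω, f ω * g ω ∂μ = ∑ s ∈ A, (∫ ω in {ω | X ω = s}, f ω ∂μ) * (∫ ω in {ω | X ω = s}, g ω ∂μ)
      / μ.real {ω | X ω = s} := by
  have hfg : Integrable (fun ω => f ω * g ω) μ :=
    integrable_of_forall_mem_finset (hf.mul hg).aestronglyMeasurable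
      fun ω => Finset.mul_mem_mul (hfA ω) (hgA ω)
  rw [integral_eq_sum_setIntegral_fiber hX hA fun _ _ => hfg.integrableOn]
  refine Finset.sum_congr rfl fun s hs => ?_
  by_cases hnull : μ.real {ω | X ω = s} = 0
  · rw [hnull, div_zero, setIntegral_measure_zero _ ((measureReal_eq_zero_iff).1 hnull)]
  · rw [eq_div_iff hnull, mul_comm,
      measureReal_mul_setIntegral_mul_of_condIndep hf hg hfA hgA _ (hCI s hs)]

theorem measureReal_inter_add_of_forall_eq_one_or_neg_one (hf : Measurable f)
    (hpm : ∀ ω, f ω = 1 ∨ f ω = -1) (S : Set Ω) :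
    μ.real ({ω | f ω = 1} ∩ S) + μ.real ({ω | f ω = -1} ∩ S) = μ.real S := by
  have hA : ∀ ω, f ω ∈ ({1, -1} : Finset ℝ) := by simpa using hpm
  have h := setIntegral_comp_eq_sum (μ := μ) hf hA (fun _ => 1) S
  rw [Finset.sum_pair (by norm_num)] at h
  simpa using h.symm

theorem setIntegral_eq_of_forall_eq_one_or_neg_one (hf : Measurable f)
    (hpm : ∀ ω, f ω = 1 ∨ f ω = -1) {a : ℝ} (ha : a = 1 ∨ a = -1) {S : Set Ω}
    (hS : μ.real S ≠ 0) :
    ∫ ω in S, f ω ∂μ = a * μ.real S * (2 * (μ.real ({ω | f ω = a} ∩ S) / μ.real S) - 1) := by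
  have hA : ∀ ω, f ω ∈ ({1, -1} : Finset ℝ) := by simpa using hpm
  have hsum := measureReal_inter_add_of_forall_eq_one_or_neg_one (μ := μ) hf hpm S
  rw [setIntegral_eq_sum hf hA, Finset.sum_pair (by norm_num)]
  rcases ha with rfl | rfl <;> field_simp
  · linear_combination -hsum
  · linear_combination hsum

end FiniteMeasure

section ProbabilityMeasure

variable [IsProbabilityMeasure μ]

theorem measureReal_add_of_forall_eq_one_or_neg_one {y : Ω → ℝ}
    (hy : Measurable y) (hpm : ∀ ω, y ω = 1 ∨ y ω = -1) :
    μ.real {ω | y ω = 1} + μ.real {ω | y ω = -1} = 1 := by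
  simpa using measureReal_inter_add_of_forall_eq_one_or_neg_one (μ := μ) hy hpm Set.univ

theorem integral_mul_sub_mul_eq_of_condIndep_of_binary {y : Ω → ℝ}
    (hy : Measurable y) (hpm : ∀ ω, y ω = 1 ∨ y ω = -1) (hf : Measurable f) (hg : Measurable g)
    (hfA : ∀ ω, f ω ∈ A₁) (hgA : ∀ ω, g ω ∈ A₂)
    (hCI : ∀ s ∈ ({1, -1} : Finset ℝ), ∀ a₁ ∈ A₁, ∀ a₂ ∈ A₂,
      μ.real ({ω | f ω = a₁} ∩ {ω | g ω = a₂} ∩ {ω | y ω = s}) * μ.real {ω | y ω = s}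
        = μ.real ({ω | f ω = a₁} ∩ {ω | y ω = s}) * μ.real ({ω | g ω = a₂} ∩ {ω | y ω = s}))
    (hp : μ.real {ω | y ω = 1} ≠ 0) (hq : μ.real {ω | y ω = -1} ≠ 0) :
    (∫ ω, f ω * g ω ∂μ) - (∫ ω, f ω ∂μ) * (∫ ω, g ω ∂μ)
      = μ.real {ω | y ω = 1} * μ.real {ω | y ω = -1}
        * ((∫ ω in {ω | y ω = 1}, f ω ∂μ) / μ.real {ω | y ω = 1}
          - (∫ ω in {ω | y ω = -1}, f ω ∂μ) / μ.real {ω | y ω = -1})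
        * ((∫ ω in {ω | y ω = 1}, g ω ∂μ) / μ.real {ω | y ω = 1}
          - (∫ ω in {ω | y ω = -1}, g ω ∂μ) / μ.real {ω | y ω = -1}) := by
  have hA : ∀ ω, y ω ∈ ({1, -1} : Finset ℝ) := by simpa using hpm
  have hpq : μ.real {ω | y ω = -1} = 1 - μ.real {ω | y ω = 1} := by
    linarith [measureReal_add_of_forall_eq_one_or_neg_one (μ := μ) hy hpm]
  rw [integral_mul_eq_sum_of_condIndep hy hA hf hg hfA hgA hCI,
    integral_eq_sum_setIntegral_fiber hy hA fun _ _ =>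
      (integrable_of_forall_mem_finset hf.aestronglyMeasurable hfA).integrableOn,
    integral_eq_sum_setIntegral_fiber hy hA fun _ _ =>
      (integrable_of_forall_mem_finset hg.aestronglyMeasurable hgA).integrableOn]
  simp only [Finset.sum_pair (show (1 : ℝ) ≠ -1 by norm_num)]
  rw [hpq] at hq ⊢
  field_simp
  ring

end ProbabilityMeasure

end

/-- Better-than-random conditionally independent binary verifiers are nonnegatively correlated;
strictly so, with `Cov(v₁,v₂) = (1-b²)(2π₁-1)(2π₂-1)`, when `b ∈ (-1,1)`. -/
theorem stmt10 {Ω : Type*} [MeasurableSpace Ω] (μ : Measure Ω) [IsProbabilityMeasure μ]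
    (y v1 v2 : Ω → ℝ)
    (hy : ∀ ω, y ω = 1 ∨ y ω = -1)
    (hv1 : ∀ ω, v1 ω = 1 ∨ v1 ω = -1) (hv2 : ∀ ω, v2 ω = 1 ∨ v2 ω = -1)
    (hmy : Measurable y) (hm1 : Measurable v1) (hm2 : Measurable v2)
    (b ψ1 ψ2 η1 η2 π1 π2 : ℝ)
    (hb : b = (μ {ω | y ω = 1}).toReal - (μ {ω | y ω = -1}).toReal)
    (hψ1 : ψ1 = (μ ({ω | v1 ω = 1} ∩ {ω | y ω = 1})).toReal / (μ {ω | y ω = 1}).toReal)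
    (hψ2 : ψ2 = (μ ({ω | v2 ω = 1} ∩ {ω | y ω = 1})).toReal / (μ {ω | y ω = 1}).toReal)
    (hη1 : η1 = (μ ({ω | v1 ω = -1} ∩ {ω | y ω = -1})).toReal / (μ {ω | y ω = -1}).toReal)
    (hη2 : η2 = (μ ({ω | v2 ω = -1} ∩ {ω | y ω = -1})).toReal / (μ {ω | y ω = -1}).toReal)
    (hπ1 : π1 = (ψ1 + η1) / 2) (hπ2 : π2 = (ψ2 + η2) / 2)
    -- conditional independence of v1 and v2 given y
    (hCI : ∀ a1 a2 s : ℝ, (a1 = 1 ∨ a1 = -1) → (a2 = 1 ∨ a2 = -1) → (s = 1 ∨ s = -1) →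
      (μ ({ω | v1 ω = a1} ∩ {ω | v2 ω = a2} ∩ {ω | y ω = s})).toReal
          * (μ {ω | y ω = s}).toReal
        = (μ ({ω | v1 ω = a1} ∩ {ω | y ω = s})).toReal
          * (μ ({ω | v2 ω = a2} ∩ {ω | y ω = s})).toReal)
    (hπ1half : 1 / 2 < π1) (hπ2half : 1 / 2 < π2) :
    0 ≤ (∫ ω, v1 ω * v2 ω ∂μ) - (∫ ω, v1 ω ∂μ) * (∫ ω, v2 ω ∂μ) ∧
    (b ∈ Set.Ioo (-1 : ℝ) 1 →
      ((∫ ω, v1 ω * v2 ω ∂μ) - (∫ ω, v1 ω ∂μ) * (∫ ω, v2 ω ∂μ)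
          = (1 - b ^ 2) * (2 * π1 - 1) * (2 * π2 - 1)) ∧
      0 < (∫ ω, v1 ω * v2 ω ∂μ) - (∫ ω, v1 ω ∂μ) * (∫ ω, v2 ω ∂μ)) := by
  simp only [← measureReal_def] at hb hψ1 hψ2 hη1 hη2 hCI
  have hmem {f : Ω → ℝ} (hf : ∀ ω, f ω = 1 ∨ f ω = -1) : ∀ ω, f ω ∈ ({1, -1} : Finset ℝ) := by
    simpa using hf
  have hp : 0 < μ.real {ω | y ω = 1} := measureReal_nonneg.lt_of_ne' fun hp0 => by
    rw [hp0, div_zero] at hψ1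
    linarith [measureReal_inter_div_le_one (μ := μ) {ω | v1 ω = -1} {ω | y ω = -1}]
  have hq : 0 < μ.real {ω | y ω = -1} := measureReal_nonneg.lt_of_ne' fun hq0 => by
    rw [hq0, div_zero] at hη1
    linarith [measureReal_inter_div_le_one (μ := μ) {ω | v1 ω = 1} {ω | y ω = 1}]
  have hcov : (∫ ω, v1 ω * v2 ω ∂μ) - (∫ ω, v1 ω ∂μ) * (∫ ω, v2 ω ∂μ)
      = 4 * μ.real {ω | y ω = 1} * μ.real {ω | y ω = -1} * (2 * π1 - 1) * (2 * π2 - 1) := by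
    rw [integral_mul_sub_mul_eq_of_condIndep_of_binary hmy hy hm1 hm2 (hmem hv1) (hmem hv2)
        (fun s hs a₁ ha₁ a₂ ha₂ => hCI a₁ a₂ s (by simpa using ha₁) (by simpa using ha₂)
          (by simpa using hs)) hp.ne' hq.ne',
      setIntegral_eq_of_forall_eq_one_or_neg_one hm1 hv1 (Or.inl rfl) hp.ne',
      setIntegral_eq_of_forall_eq_one_or_neg_one hm2 hv2 (Or.inl rfl) hp.ne',
      setIntegral_eq_of_forall_eq_one_or_neg_one hm1 hv1 (Or.inr rfl) hq.ne',
      setIntegral_eq_of_forall_eq_one_or_neg_one hm2 hv2 (Or.inr rfl) hq.ne',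
      ← hψ1, ← hψ2, ← hη1, ← hη2, hπ1, hπ2]
    field_simp
    ring
  have hpos : 0 < (∫ ω, v1 ω * v2 ω ∂μ) - (∫ ω, v1 ω ∂μ) * (∫ ω, v2 ω ∂μ) := by
    have h₁ : 0 < 2 * π1 - 1 := by linarith
    have h₂ : 0 < 2 * π2 - 1 := by linarith
    rw [hcov]
    positivity
  refine ⟨hpos.le, fun _ => ⟨?_, hpos⟩⟩
  rw [hcov, hb]
  linear_combination (1 + μ.real {ω | y ω = 1} + μ.real {ω | y ω = -1})
    * (2 * π1 - 1) * (2 * π2 - 1) * measureReal_add_of_forall_eq_one_or_neg_one (μ := μ) hmy hy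
end
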